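/- Let Γ = {p, ~p∨s, r⊃t, ~p∨q, ~q}, where p, q, r, s, t are distinct propositional variables. Then Dab({p ∧ ~p, q ∧ ~q}) is a minimal Dab-consequence of Γ, U(Γ) = {p ∧ ~p, q ∧ ~q}, and there is no finite Δ ⊆ Ω with Δ ∩ U(Γ) = ∅ and Γ ⊢_CLuN s ∨ Dab(Δ); hence s is not finally ACLuN1-derivable from Γ. -/

import Mathlib

/-- Propositional formulas: variables, ⊥, ⊃, ∧, ∨, ≡, and paraconsistent negation ~. -/
inductive Formula : Type
  | var : ℕ → Formula
  | bot : Formula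
  | imp : Formula → Formula → Formula
  | conj : Formula → Formula → Formula
  | disj : Formula → Formula → Formula
  | equiv : Formula → Formula → Formula
  | pneg : Formula → Formula
  deriving DecidableEq

namespace Formula

/-- Classical negation: ¬A := A ⊃ ⊥. -/
def neg (A : Formula) : Formula := imp A bot

end Formula

/-- Hilbert-style derivability. `cl = false` gives CLuN (full positive classical logic,
including Peirce's law, plus ⊥ ⊃ A and A ∨ ~A, with modus ponens as only rule);
`cl = true` additionally has the axiom schema (A ∧ ~A) ⊃ B, giving CL. -/
inductive Deriv (cl : Bool) (Γ : Set Formula) : Formula → Prop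
  | prem {A : Formula} : A ∈ Γ → Deriv cl Γ A
  | axK (A B : Formula) : Deriv cl Γ (A.imp (B.imp A))
  | axS (A B C : Formula) : Deriv cl Γ ((A.imp (B.imp C)).imp ((A.imp B).imp (A.imp C)))
  | axPeirce (A B : Formula) : Deriv cl Γ (((A.imp B).imp A).imp A)
  | axAndElimL (A B : Formula) : Deriv cl Γ ((A.conj B).imp A)
  | axAndElimR (A B : Formula) : Deriv cl Γ ((A.conj B).imp B)
  | axAndIntro (A B : Formula) : Deriv cl Γ (A.imp (B.imp (A.conj B)))
  | axOrIntroL (A B : Formula) : Deriv cl Γ (A.imp (A.disj B))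
  | axOrIntroR (A B : Formula) : Deriv cl Γ (B.imp (A.disj B))
  | axOrElim (A B C : Formula) : Deriv cl Γ ((A.imp C).imp ((B.imp C).imp ((A.disj B).imp C)))
  | axIffElimL (A B : Formula) : Deriv cl Γ ((A.equiv B).imp (A.imp B))
  | axIffElimR (A B : Formula) : Deriv cl Γ ((A.equiv B).imp (B.imp A))
  | axIffIntro (A B : Formula) : Deriv cl Γ ((A.imp B).imp ((B.imp A).imp (A.equiv B)))
  | axBot (A : Formula) : Deriv cl Γ (Formula.bot.imp A)
  | axEM (A : Formula) : Deriv cl Γ (A.disj A.pneg)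
  | axCL (A B : Formula) : cl = true → Deriv cl Γ ((A.conj A.pneg).imp B)
  | mp {A B : Formula} : Deriv cl Γ (A.imp B) → Deriv cl Γ A → Deriv cl Γ B

/-- Γ ⊢_CLuN A -/
def CLuN (Γ : Set Formula) (A : Formula) : Prop := Deriv false Γ A

/-- Γ ⊢_CL A -/
def CL (Γ : Set Formula) (A : Formula) : Prop := Deriv true Γ A

/-- The set of abnormalities Ω: all formulas of the form A ∧ ~A. -/
def Omega : Set Formula := {F | ∃ A : Formula, F = A.conj A.pneg}

/-- An arbitrary (noncomputable) linear order on formulas, used only to pick a canonical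
ordering of the disjuncts of a Dab-formula. -/
noncomputable instance : LinearOrder Formula :=
  @linearOrderOfSTO Formula WellOrderingRel _ (Classical.decRel _)

/-- Disjunction of a list of formulas; the empty disjunction is ⊥. -/
def listDisj : List Formula → Formula
  | [] => Formula.bot
  | [A] => A
  | A :: B :: rest => A.disj (listDisj (B :: rest))

/-- Dab(Δ): the disjunction of the members of the finite set Δ (by convention Dab(∅) := ⊥). -/
noncomputable def Dab (Δ : Finset Formula) : Formula := listDisj (Δ.sort (· ≤ ·))

/-- Dab(Δ) is a minimal Dab-consequence of Γ: Δ is finite and nonempty, Δ ⊆ Ω,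
Γ ⊢_CLuN Dab(Δ), and no nonempty Δ' ⊊ Δ has Γ ⊢_CLuN Dab(Δ'). -/
def MinDabConsequence (Γ : Set Formula) (Δ : Finset Formula) : Prop :=
  Δ.Nonempty ∧ ↑Δ ⊆ Omega ∧ CLuN Γ (Dab Δ) ∧
    ∀ Δ' : Finset Formula, Δ'.Nonempty → Δ' ⊂ Δ → ¬ CLuN Γ (Dab Δ')

/-- U(Γ): the set of formulas unreliable with respect to Γ. -/
def U (Γ : Set Formula) : Set Formula :=
  {A | ∃ Δ : Finset Formula, MinDabConsequence Γ Δ ∧ A ∈ Δ}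

/-- A is finally ACLuN1-derivable from Γ iff there is a finite Δ ⊆ Ω (possibly empty)
such that Γ ⊢_CLuN A ∨ Dab(Δ) and Δ ∩ U(Γ) = ∅. -/
def FinallyDerivable (Γ : Set Formula) (A : Formula) : Prop :=
  ∃ Δ : Finset Formula, ↑Δ ⊆ Omega ∧ CLuN Γ (A.disj (Dab Δ)) ∧
    (↑Δ ∩ U Γ : Set Formula) = ∅

/-- Γ = {p, ~p∨s, r⊃t, ~p∨q, ~q}. -/
def Gamma2 (p q r s t : ℕ) : Set Formula :=
  {Formula.var p,
   (Formula.var p).pneg.disj (Formula.var s),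
   (Formula.var r).imp (Formula.var t),
   (Formula.var p).pneg.disj (Formula.var q),
   (Formula.var q).pneg}


/-! CLuN is sound for models in which a valuation fixes the variables and `~A` is true whenever
`A` is false but may be chosen freely when `A` is true. Letting `~A` be "glutty" for exactly one
formula `C` gives models in which `C ∧ ~C` is the only true abnormality, so every Dab-formula
derived from premises true in such a model has `C ∧ ~C` as a disjunct. Γ has two such models:
all variables true with `C = q`, and only `p` true with `C = p`. Hence every Dab-consequence of Γ
contains both `p ∧ ~p` and `q ∧ ~q`; since Γ derives their disjunction (from `p`, `~p ∨ q`, `~q`),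
it is the only minimal Dab-consequence. The second model also makes `s` false, so it refutes
`s ∨ Dab(Δ)` whenever `p ∧ ~p ∉ Δ`. -/

namespace Formula

/-- CLuN semantics: `~A` is forced only where `A` fails; `g` collects the formulas that hold
together with their paraconsistent negation. -/
def Holds (v : Set ℕ) (g : Set Formula) : Formula → Prop
  | var n => n ∈ v
  | bot => False
  | imp A B => Holds v g A → Holds v g B
  | conj A B => Holds v g A ∧ Holds v g B
  | disj A B => Holds v g A ∨ Holds v g B
  | equiv A B => (Holds v g A ↔ Holds v g B)
  | pneg A => ¬ Holds v g A ∨ A ∈ g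

theorem holds_listDisj_iff {v : Set ℕ} {g : Set Formula} (l : List Formula) :
    Holds v g (listDisj l) ↔ ∃ A ∈ l, Holds v g A := by
  induction l using listDisj.induct with
  | case1 => simp [listDisj, Holds]
  | case2 A => simp [listDisj]
  | case3 A B rest ih => simp [listDisj, Holds, ih]

theorem holds_Dab_iff {v : Set ℕ} {g : Set Formula} (Δ : Finset Formula) :
    Holds v g (Dab Δ) ↔ ∃ A ∈ Δ, Holds v g A := by
  simp [Dab, holds_listDisj_iff]

theorem eq_of_holds_abnormality {v : Set ℕ} {C D : Formula}
    (h : Holds v {C} (D.conj D.pneg)) : D = C := by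
  simp only [Holds, Set.mem_singleton_iff] at h
  tauto

end Formula

open Formula

theorem Deriv.holds {Γ : Set Formula} {A : Formula} (h : Deriv false Γ A) {v : Set ℕ}
    {g : Set Formula} (hΓ : ∀ B ∈ Γ, Holds v g B) : Holds v g A := by
  induction h with
  | prem hB => exact hΓ _ hB
  | axCL _ _ hcl => cases hcl
  | mp _ _ ihAB ihA => exact ihAB ihA
  | _ => simp only [Holds]; tauto

theorem abnormality_mem_of_CLuN_disj_Dab {Γ : Set Formula} {v : Set ℕ} {A C : Formula}
    {Δ : Finset Formula} (hΓ : ∀ B ∈ Γ, Holds v {C} B) (hA : ¬ Holds v {C} A)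
    (hΔ : ↑Δ ⊆ Omega) (h : CLuN Γ (A.disj (Dab Δ))) : C.conj C.pneg ∈ Δ := by
  obtain ⟨B, hBΔ, hB⟩ := (holds_Dab_iff Δ).1 ((Deriv.holds h hΓ).resolve_left hA)
  obtain ⟨D, rfl⟩ := hΔ hBΔ
  rwa [eq_of_holds_abnormality hB] at hBΔ

theorem abnormality_mem_of_CLuN_Dab {Γ : Set Formula} {v : Set ℕ} {C : Formula}
    {Δ : Finset Formula} (hΓ : ∀ B ∈ Γ, Holds v {C} B) (hΔ : ↑Δ ⊆ Omega)
    (h : CLuN Γ (Dab Δ)) : C.conj C.pneg ∈ Δ :=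
  abnormality_mem_of_CLuN_disj_Dab (A := bot) hΓ id hΔ (Deriv.mp (Deriv.axOrIntroR _ _) h)

theorem minDabConsequence_of_forall_subset {Γ : Set Formula} {Δ₀ : Finset Formula}
    (hne : Δ₀.Nonempty) (hΩ : ↑Δ₀ ⊆ Omega) (hDab : CLuN Γ (Dab Δ₀))
    (hleast : ∀ Δ : Finset Formula, ↑Δ ⊆ Omega → CLuN Γ (Dab Δ) → Δ₀ ⊆ Δ) :
    MinDabConsequence Γ Δ₀ :=
  ⟨hne, hΩ, hDab, fun Δ' _ hlt hΔ' =>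
    hlt.not_subset (hleast Δ' ((Finset.coe_subset.2 hlt.subset).trans hΩ) hΔ')⟩

theorem U_eq_of_forall_subset {Γ : Set Formula} {Δ₀ : Finset Formula}
    (hne : Δ₀.Nonempty) (hΩ : ↑Δ₀ ⊆ Omega) (hDab : CLuN Γ (Dab Δ₀))
    (hleast : ∀ Δ : Finset Formula, ↑Δ ⊆ Omega → CLuN Γ (Dab Δ) → Δ₀ ⊆ Δ) :
    U Γ = ↑Δ₀ := by
  ext A
  constructor
  · rintro ⟨Δ, ⟨-, hΔΩ, hΔ, hmin⟩, hA⟩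
    obtain rfl : Δ₀ = Δ := by_contra fun hne' =>
      hmin Δ₀ hne ((hleast Δ hΔΩ hΔ).ssubset_of_ne hne') hDab
    exact hA
  · exact fun hA => ⟨Δ₀, minDabConsequence_of_forall_subset hne hΩ hDab hleast, hA⟩

namespace Deriv

variable {cl : Bool} {Γ : Set Formula} {A B C : Formula}

theorem weaken_imp (h : Deriv cl Γ B) : Deriv cl Γ (A.imp B) :=
  mp (axK B A) h

theorem imp_mp (hABC : Deriv cl Γ (A.imp (B.imp C))) (hAB : Deriv cl Γ (A.imp B)) :
    Deriv cl Γ (A.imp C) :=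
  mp (mp (axS A B C) hABC) hAB

theorem imp_trans (hAB : Deriv cl Γ (A.imp B)) (hBC : Deriv cl Γ (B.imp C)) :
    Deriv cl Γ (A.imp C) :=
  imp_mp (weaken_imp hBC) hAB

theorem disj_elim (hAC : Deriv cl Γ (A.imp C)) (hBC : Deriv cl Γ (B.imp C))
    (hAB : Deriv cl Γ (A.disj B)) : Deriv cl Γ C :=
  mp (mp (mp (axOrElim A B C) hAC) hBC) hAB

theorem disj_comm (h : Deriv cl Γ (A.disj B)) : Deriv cl Γ (B.disj A) :=
  disj_elim (axOrIntroR B A) (axOrIntroL B A) h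

theorem abnormality_disj (hA : Deriv cl Γ A) (hAB : Deriv cl Γ (A.pneg.disj B))
    (hB : Deriv cl Γ B.pneg) :
    Deriv cl Γ ((A.conj A.pneg).disj (B.conj B.pneg)) :=
  disj_elim (imp_trans (mp (axAndIntro A A.pneg) hA) (axOrIntroL _ _))
    (imp_trans (imp_mp (axAndIntro B B.pneg) (weaken_imp hB)) (axOrIntroR _ _)) hAB

end Deriv

theorem Dab_pair_of_lt {A B : Formula} (h : A < B) : Dab {A, B} = A.disj B := by
  rw [Dab, Finset.sort_insert (r := (· ≤ ·)) (s := {B}) (by simpa using h.le)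
    (by simpa using h.ne), Finset.sort_singleton, listDisj, listDisj]

theorem Deriv.Dab_pair {cl : Bool} {Γ : Set Formula} {A B : Formula} (hAB : A ≠ B)
    (h : Deriv cl Γ (A.disj B)) : Deriv cl Γ (Dab {A, B}) := by
  rcases hAB.lt_or_gt with hlt | hgt
  · rwa [Dab_pair_of_lt hlt]
  · rw [Finset.pair_comm, Dab_pair_of_lt hgt]
    exact h.disj_comm

section Gamma2

variable {p q r s t : ℕ}

theorem CLuN_Gamma2_Dab (hpq : p ≠ q) :
    CLuN (Gamma2 p q r s t)
      (Dab {(var p).conj (var p).pneg, (var q).conj (var q).pneg}) :=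
  Deriv.Dab_pair (by simpa using hpq) <|
    Deriv.abnormality_disj (Deriv.prem (by simp [Gamma2])) (Deriv.prem (by simp [Gamma2]))
      (Deriv.prem (by simp [Gamma2]))

theorem holds_Gamma2_univ : ∀ B ∈ Gamma2 p q r s t, Holds Set.univ {var q} B := by
  simp [Gamma2, Holds]

theorem holds_Gamma2_singleton (hpq : p ≠ q) (hpr : p ≠ r) :
    ∀ B ∈ Gamma2 p q r s t, Holds {p} {var p} B := by
  simp [Gamma2, Holds, hpq.symm, hpr.symm]

theorem pair_subset_of_CLuN_Gamma2_Dab (hpq : p ≠ q) (hpr : p ≠ r) {Δ : Finset Formula}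
    (hΔ : ↑Δ ⊆ Omega) (h : CLuN (Gamma2 p q r s t) (Dab Δ)) :
    {(var p).conj (var p).pneg, (var q).conj (var q).pneg} ⊆ Δ :=
  Finset.insert_subset_iff.2
    ⟨abnormality_mem_of_CLuN_Dab (holds_Gamma2_singleton hpq hpr) hΔ h,
      Finset.singleton_subset_iff.2 (abnormality_mem_of_CLuN_Dab holds_Gamma2_univ hΔ h)⟩

end Gamma2

theorem example3_analysis_general (p q r s t : ℕ)
    (hpq : p ≠ q) (hpr : p ≠ r) (hps : p ≠ s) :
    MinDabConsequence (Gamma2 p q r s t)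
      {(Formula.var p).conj (Formula.var p).pneg,
       (Formula.var q).conj (Formula.var q).pneg} ∧
    U (Gamma2 p q r s t) =
      {(Formula.var p).conj (Formula.var p).pneg,
       (Formula.var q).conj (Formula.var q).pneg} ∧
    ¬ (∃ Δ : Finset Formula, ↑Δ ⊆ Omega ∧
        (↑Δ ∩ U (Gamma2 p q r s t) : Set Formula) = ∅ ∧
        CLuN (Gamma2 p q r s t) ((Formula.var s).disj (Dab Δ))) ∧
    ¬ FinallyDerivable (Gamma2 p q r s t) (Formula.var s) := by
  set Γ := Gamma2 p q r s t
  have hΩ : ↑({(var p).conj (var p).pneg, (var q).conj (var q).pneg} : Finset Formula) ⊆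
      Omega := by
    simp [Set.insert_subset_iff, Omega]
  have hleast : ∀ Δ : Finset Formula, ↑Δ ⊆ Omega → CLuN Γ (Dab Δ) → _ ⊆ Δ :=
    fun _ ↦ pair_subset_of_CLuN_Gamma2_Dab hpq hpr
  have hU : U Γ = {(var p).conj (var p).pneg, (var q).conj (var q).pneg} := by
    rw [U_eq_of_forall_subset (Finset.insert_nonempty _ _) hΩ (CLuN_Gamma2_Dab hpq) hleast,
      Finset.coe_pair]
  have hs : ¬ ∃ Δ : Finset Formula, ↑Δ ⊆ Omega ∧ (↑Δ ∩ U Γ : Set Formula) = ∅ ∧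
      CLuN Γ ((var s).disj (Dab Δ)) := by
    rintro ⟨Δ, hΔΩ, hΔU, hΔ⟩
    have hpp := abnormality_mem_of_CLuN_disj_Dab (holds_Gamma2_singleton hpq hpr)
      (by simpa [Holds] using hps.symm) hΔΩ hΔ
    exact hΔU.subset ⟨hpp, by simp [hU]⟩
  exact ⟨minDabConsequence_of_forall_subset (Finset.insert_nonempty _ _) hΩ
    (CLuN_Gamma2_Dab hpq) hleast, hU, hs, fun ⟨Δ, hΔΩ, hΔ, hΔU⟩ ↦ hs ⟨Δ, hΔΩ, hΔU, hΔ⟩⟩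

/-- For pairwise distinct p, q, r, s, t: Dab({p∧~p, q∧~q}) is a minimal Dab-consequence
of Γ, U(Γ) = {p∧~p, q∧~q}, and there is no finite Δ ⊆ Ω with Δ ∩ U(Γ) = ∅ and
Γ ⊢_CLuN s ∨ Dab(Δ); hence s is not finally ACLuN1-derivable from Γ. -/
theorem example3_analysis (p q r s t : ℕ)
    (hpq : p ≠ q) (hpr : p ≠ r) (hps : p ≠ s) (hpt : p ≠ t) (hqr : q ≠ r)
    (hqs : q ≠ s) (hqt : q ≠ t) (hrs : r ≠ s) (hrt : r ≠ t) (hst : s ≠ t) :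
    MinDabConsequence (Gamma2 p q r s t)
      {(Formula.var p).conj (Formula.var p).pneg,
       (Formula.var q).conj (Formula.var q).pneg} ∧
    U (Gamma2 p q r s t) =
      {(Formula.var p).conj (Formula.var p).pneg,
       (Formula.var q).conj (Formula.var q).pneg} ∧
    ¬ (∃ Δ : Finset Formula, ↑Δ ⊆ Omega ∧
        (↑Δ ∩ U (Gamma2 p q r s t) : Set Formula) = ∅ ∧
        CLuN (Gamma2 p q r s t) ((Formula.var s).disj (Dab Δ))) ∧
    ¬ FinallyDerivable (Gamma2 p q r s t) (Formula.var s) :=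
  example3_analysis_general p q r s t hpq hpr hps
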